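/- Let C be an [n,k] linear code over F_q with ℓ = dim Hull(C). Write a generator matrix of C as G' = [H; A] where H is an ℓ×n generator matrix of Hull(C) and A is a (k−ℓ)×n matrix. Then the (n+ℓ)-column matrix [[H, I_ℓ],[A, 0]] (appending the ℓ×ℓ identity to the hull rows and zero columns to the remaining rows) generates an LCD code. Consequently, the minimal length of an LCD embedding of C is exactly n+ℓ. -/

import Mathlib

open Matrix

variable {F : Type*} [Field F]

/-- Row space of a matrix: the code generated by its rows. -/
def rowSpace {m ι : Type*} (G : Matrix m ι F) : Submodule F (ι → F) :=
  Submodule.span F (Set.range G)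

/-- Dual of a code with respect to the form `⟨x, c⟩ = ∑ i, x i * s (c i)`.
For `s = id` this is the Euclidean dual; for `s = (· ^ q)` the Hermitian dual. -/
def sDual {ι : Type*} [Fintype ι] (s : F → F) (C : Submodule F (ι → F)) :
    Submodule F (ι → F) where
  carrier := {x | ∀ c ∈ C, ∑ i, x i * s (c i) = 0}
  zero_mem' := by intro c hc; simp
  add_mem' := by
    intro a b ha hb c hc
    simp [Pi.add_apply, add_mul, Finset.sum_add_distrib, ha c hc, hb c hc]
  smul_mem' := by
    intro r a ha c hc
    simp [Pi.smul_apply, smul_eq_mul, mul_assoc, ← Finset.mul_sum, ha c hc]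

/-- The hull of a code: its intersection with its dual. -/
def sHull {ι : Type*} [Fintype ι] (s : F → F) (C : Submodule F (ι → F)) :
    Submodule F (ι → F) :=
  C ⊓ sDual s C

/-- `Ct` is an LCD embedding of `C`: `Ct` is LCD and puncturing `Ct` on the
complement of some coordinate subset recovers `C`. -/
def IsLCDEmbedding {ι : Type*} [Fintype ι] {N : ℕ} (s : F → F)
    (C : Submodule F (ι → F)) (Ct : Submodule F (Fin N → F)) : Prop :=
  sHull s Ct = ⊥ ∧ ∃ f : ι → Fin N, Function.Injective f ∧
    Submodule.map (LinearMap.funLeft F F f) Ct = C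

/-! Write `G̃ = [[H, I], [A, 0]]`. A word `c G̃` of the hull of its row space satisfies
`G̃ G̃ᵀ c = 0`, and `G̃ G̃ᵀ = diag(I, A Aᵀ)` because the rows of `H` are orthogonal to all of `C`.
`A Aᵀ` is nonsingular: if `A Aᵀ c = 0` then `c A ∈ C` is orthogonal to `A` and `H`, so it lies in
the hull `rowSpace H`, and independence of the rows of `[H; A]` forces `c = 0`. Hence the code is
LCD, and reordering its coordinates gives an LCD embedding of `C` of length `n + ℓ`.

Conversely, let `C̃ ≤ F^N` be LCD and puncture to `C`. The words of `C̃` whose puncturing lies in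
`Hull(C)` form a space of dimension at least `ℓ`, and restricting them to the `N - n` deleted
coordinates is injective: a word vanishing there has the same inner products as its puncturing,
so it lies in `Hull(C̃) = 0`. -/

section RowSpace

variable {m ι : Type*}

lemma map_funLeft_rowSpace {ι' : Type*} (G : Matrix m ι F) (f : ι' → ι) :
    (rowSpace G).map (LinearMap.funLeft F F f) = rowSpace (G.submatrix id f) := by
  rw [rowSpace, Submodule.map_span]
  exact congrArg _ (Set.range_comp _ (G : m → ι → F)).symm

variable [Fintype m]

lemma mem_rowSpace_iff {G : Matrix m ι F} {x : ι → F} : x ∈ rowSpace G ↔ ∃ c, c ᵥ* G = x := by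
  change x ∈ Submodule.span F (Set.range G.row) ↔ _
  rw [← range_vecMulLinear]
  rfl

lemma mem_sDual_rowSpace_iff [Fintype ι] {G : Matrix m ι F} {x : ι → F} :
    x ∈ sDual id (rowSpace G) ↔ G *ᵥ x = 0 := by
  constructor
  · intro hx
    ext i
    rw [mulVec, dotProduct_comm]
    exact hx (G i) (Submodule.subset_span ⟨i, rfl⟩)
  · intro hx c hc
    obtain ⟨y, rfl⟩ := mem_rowSpace_iff.mp hc
    change x ⬝ᵥ (y ᵥ* G) = 0
    rw [dotProduct_comm, ← dotProduct_mulVec, hx, dotProduct_zero]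

lemma sHull_rowSpace_eq_bot [Fintype ι] (G : Matrix m ι F)
    (hG : Function.Injective (G * Gᵀ).mulVec) : sHull id (rowSpace G) = ⊥ := by
  refine eq_bot_iff.mpr fun x ⟨hxC, hxD⟩ => ?_
  obtain ⟨c, rfl⟩ := mem_rowSpace_iff.mp hxC
  have hc : (G * Gᵀ) *ᵥ c = (G * Gᵀ) *ᵥ 0 := by
    rw [← mulVec_mulVec, mulVec_transpose, mulVec_zero, ← mem_sDual_rowSpace_iff]
    exact hxD
  rw [hG hc, zero_vecMul]
  exact zero_mem _

lemma mul_transpose_eq_zero_of_mem_sDual [Fintype ι] {k : Type*} {G : Matrix m ι F}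
    {H : Matrix k ι F} (hH : ∀ i, H i ∈ sDual id (rowSpace G)) : H * Gᵀ = 0 := by
  ext i j
  have hi := congrFun (mem_sDual_rowSpace_iff.mp (hH i)) j
  simpa [mul_apply, mulVec, dotProduct, mul_comm] using hi

end RowSpace

lemma injective_mulVec_fromBlocks_one {a b : Type*} [Fintype a] [Fintype b] [DecidableEq a]
    {M : Matrix b b F} (hM : Function.Injective M.mulVec) :
    Function.Injective (fromBlocks (1 : Matrix a a F) 0 0 M).mulVec := by
  intro u v huv
  simp only [fromBlocks_mulVec, one_mulVec, zero_mulVec, add_zero, zero_add] at huv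
  have hr : u ∘ Sum.inr = v ∘ Sum.inr := hM (funext fun j => by simpa using congrFun huv (.inr j))
  ext (i | j)
  · simpa using congrFun huv (.inl i)
  · exact congrFun hr j

section HullSplitting

variable {n a b : Type*} [Fintype n] [Fintype a] (H : Matrix a n F) (A : Matrix b n F)

-- Without both ascriptions `*` elaborates through the `CStarMatrix` instance.
lemma fromBlocks_mul_transpose [DecidableEq a] (hHH : H * Hᵀ = 0) (hHA : H * Aᵀ = 0) :
    fromBlocks H (1 : Matrix a a F) A 0 * (fromBlocks H (1 : Matrix a a F) A 0)ᵀ =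
      fromBlocks 1 0 0 (A * Aᵀ) := by
  have hAH : A * Hᵀ = 0 := by simpa using congrArg transpose hHA
  rw [fromBlocks_transpose, transpose_one, transpose_zero, fromBlocks_multiply]
  simp [hHH, hHA, hAH]

variable [Fintype b] {C : Submodule F (n → F)}

lemma mul_transpose_eq_zero_of_rowSpace_eq_sHull (hH : rowSpace H = sHull id C)
    (hC : rowSpace (fromRows H A) = C) : H * Hᵀ = 0 ∧ H * Aᵀ = 0 := by
  have hHD (i : a) : H i ∈ sDual id (rowSpace (fromRows H A)) := by
    have hi : H i ∈ sHull id C := hH ▸ Submodule.subset_span ⟨i, rfl⟩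
    exact hC ▸ hi.2
  rw [← fromCols_ext_iff, fromCols_zero, ← mul_fromCols, ← transpose_fromRows]
  exact mul_transpose_eq_zero_of_mem_sDual hHD

lemma injective_mulVec_mul_transpose (hH : rowSpace H = sHull id C)
    (hC : rowSpace (fromRows H A) = C) (hind : LinearIndependent F (fromRows H A)) :
    Function.Injective (A * Aᵀ).mulVec := by
  refine (injective_iff_map_eq_zero (A * Aᵀ).mulVecLin).mpr fun c (hc : (A * Aᵀ) *ᵥ c = 0) => ?_
  obtain ⟨-, hHA⟩ := mul_transpose_eq_zero_of_rowSpace_eq_sHull H A hH hC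
  have hyC : c ᵥ* A ∈ C := hC ▸ mem_rowSpace_iff.mpr ⟨Sum.elim 0 c, by simp⟩
  have hyD : c ᵥ* A ∈ sDual id C := by
    rw [← hC, mem_sDual_rowSpace_iff, fromRows_mulVec, ← mulVec_transpose, mulVec_mulVec,
      mulVec_mulVec, hHA, hc, zero_mulVec, Sum.elim_zero_zero]
  obtain ⟨d, hd⟩ := mem_rowSpace_iff.mp (hH ▸ ⟨hyC, hyD⟩ : c ᵥ* A ∈ rowSpace H)
  have hrel : Sum.elim d (-c) ᵥ* fromRows H A = 0 ᵥ* fromRows H A := by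
    rw [sumElim_vecMul_fromRows, hd, neg_vecMul, add_neg_cancel, zero_vecMul]
  simpa using congrArg (· ∘ Sum.inr) (vecMul_injective_iff.mpr hind hrel)

lemma injective_mulVec_fromBlocks_mul_transpose [DecidableEq a]
    (hH : rowSpace H = sHull id C) (hC : rowSpace (fromRows H A) = C)
    (hind : LinearIndependent F (fromRows H A)) :
    Function.Injective
      (fromBlocks H (1 : Matrix a a F) A 0 * (fromBlocks H (1 : Matrix a a F) A 0)ᵀ).mulVec := by
  obtain ⟨hHH, hHA⟩ := mul_transpose_eq_zero_of_rowSpace_eq_sHull H A hH hC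
  rw [fromBlocks_mul_transpose H A hHH hHA]
  exact injective_mulVec_fromBlocks_one (injective_mulVec_mul_transpose H A hH hC hind)

end HullSplitting

lemma isLCDEmbedding_rowSpace_submatrix {m ι κ : Type*} [Fintype m] [Fintype ι] [Fintype κ]
    {N : ℕ} (G : Matrix m κ F) (hG : Function.Injective (G * Gᵀ).mulVec) (e : Fin N ≃ κ)
    {g : ι → κ} (hg : Function.Injective g) :
    IsLCDEmbedding id (rowSpace (G.submatrix id g)) (rowSpace (G.submatrix id e)) := by
  refine ⟨sHull_rowSpace_eq_bot _ ?_, e.symm ∘ g, e.symm.injective.comp hg, ?_⟩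
  · rwa [transpose_submatrix, submatrix_mul_equiv, submatrix_id_id]
  · rw [map_funLeft_rowSpace, submatrix_submatrix, Function.comp_id, ← Function.comp_assoc,
      Equiv.self_comp_symm, Function.id_comp]

section Puncturing

variable {ι : Type*} [Fintype ι] {N : ℕ} {C : Submodule F (ι → F)}
  {Ct : Submodule F (Fin N → F)}

lemma mem_sHull_of_funLeft_mem_sDual {f : ι → Fin N} (hf : Function.Injective f)
    (hmap : Ct.map (LinearMap.funLeft F F f) = C) {v : Fin N → F} (hv : v ∈ Ct)
    (hvC : LinearMap.funLeft F F f v ∈ sDual id C) (hsupp : ∀ i ∉ Set.range f, v i = 0) :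
    v ∈ sHull id Ct := by
  refine ⟨hv, fun w hw => ?_⟩
  rw [← hvC _ (hmap ▸ Submodule.mem_map_of_mem hw)]
  exact (Fintype.sum_of_injective f hf _ _ (fun i hi => by simp [hsupp i hi]) fun _ => rfl).symm

lemma IsLCDEmbedding.card_add_finrank_sHull_le (h : IsLCDEmbedding id C Ct) :
    Fintype.card ι + Module.finrank F (sHull id C) ≤ N := by
  classical
  obtain ⟨hlcd, f, hf, hmap⟩ := h
  set π := LinearMap.funLeft F F f
  set W := Ct ⊓ (sHull id C).comap π
  have hhull : Module.finrank F (sHull id C) ≤ Module.finrank F W := by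
    refine (Submodule.finrank_mono fun x hx => ?_).trans (Submodule.finrank_map_le π W)
    obtain ⟨v, hv, rfl⟩ := hmap ▸ hx.1
    exact ⟨v, ⟨hv, hx⟩, rfl⟩
  have hrestrict : Function.Injective
      ((LinearMap.funLeft F F (Subtype.val : ↥(Set.range f)ᶜ → Fin N)).comp W.subtype) := by
    rw [← LinearMap.ker_eq_bot, eq_bot_iff]
    intro v hv
    have hsupp (i) (hi : i ∉ Set.range f) : (v : Fin N → F) i = 0 := congrFun hv ⟨i, hi⟩
    have := mem_sHull_of_funLeft_mem_sDual hf hmap v.2.1 v.2.2.2 hsupp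
    rw [hlcd, Submodule.mem_bot] at this
    exact (Submodule.mem_bot F).mpr (Subtype.ext this)
  have hW := LinearMap.finrank_le_finrank_of_injective hrestrict
  rw [Module.finrank_fintype_fun_eq_card, Fintype.card_compl_set,
    Set.card_range_of_injective hf, Fintype.card_fin] at hW
  have hN := Fintype.card_le_of_injective f hf
  rw [Fintype.card_fin] at hN
  omega

end Puncturing

theorem stmt6_general {F : Type*} [Field F] {n k ℓ : ℕ}
    {C : Submodule F (Fin n → F)}
    (H : Matrix (Fin ℓ) (Fin n) F) (A : Matrix (Fin (k - ℓ)) (Fin n) F)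
    (hH : rowSpace H = sHull (id : F → F) C)
    (hC : rowSpace (fromRows H A) = C)
    (hind : LinearIndependent F (fromRows H A))
    (hl : ℓ = Module.finrank F ↥(sHull (id : F → F) C)) :
    sHull (id : F → F)
        (rowSpace (fromBlocks H (1 : Matrix (Fin ℓ) (Fin ℓ) F) A 0)) = ⊥ ∧
      IsLeast {N : ℕ | ∃ Ct : Submodule F (Fin N → F),
        IsLCDEmbedding (id : F → F) C Ct} (n + ℓ) := by
  have hG := injective_mulVec_fromBlocks_mul_transpose H A hH hC hind
  have hpunct : (fromBlocks H (1 : Matrix (Fin ℓ) (Fin ℓ) F) A 0).submatrix id Sum.inl =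
      fromRows H A := by
    ext (i | i) j <;> rfl
  have hembed := isLCDEmbedding_rowSpace_submatrix _ hG finSumFinEquiv.symm Sum.inl_injective
  rw [hpunct, hC] at hembed
  refine ⟨sHull_rowSpace_eq_bot _ hG, ⟨_, hembed⟩, fun N ⟨Ct, hCt⟩ => ?_⟩
  simpa [← hl] using hCt.card_add_finrank_sHull_le

/-- `[[H, I_ℓ], [A, 0]]` generates an LCD code, and the minimal length of an LCD
embedding of `C` is exactly `n + ℓ`. -/
theorem stmt6 {F : Type*} [Field F] [Fintype F] {n k ℓ : ℕ}
    {C : Submodule F (Fin n → F)}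
    (H : Matrix (Fin ℓ) (Fin n) F) (A : Matrix (Fin (k - ℓ)) (Fin n) F)
    (hH : rowSpace H = sHull (id : F → F) C)
    (hC : rowSpace (fromRows H A) = C)
    (hind : LinearIndependent F (fromRows H A))
    (hl : ℓ = Module.finrank F ↥(sHull (id : F → F) C)) :
    sHull (id : F → F)
        (rowSpace (fromBlocks H (1 : Matrix (Fin ℓ) (Fin ℓ) F) A 0)) = ⊥ ∧
      IsLeast {N : ℕ | ∃ Ct : Submodule F (Fin N → F),
        IsLCDEmbedding (id : F → F) C Ct} (n + ℓ) :=
  stmt6_general H A hH hC hind hl
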